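/- arXiv:1408.3907 — 3 statements merged into one kernel-verified Lean document; each statement's English description precedes it below -/
import Mathlib

section
/- Let X be a compact metric space and Ψ_0, Ψ_1, …, Ψ_K : X → ℝ be continuous functions. Define σ* = sup over λ = (λ_1,…,λ_K) ∈ ℝ^K of { θ ∈ ℝ : θ ≤ Ψ_0(x) + Σ_{i=1}^K λ_i Ψ_i(x) for all x ∈ X }. If the only vector v = (v_1,…,v_K) ∈ ℝ^K satisfying 0 ≤ Σ_{i=1}^K v_i Ψ_i(x) for all x ∈ X is v = 0, then there exists λ* ∈ ℝ^K such that σ* ≤ Ψ_0(x) + Σ_{i=1}^K λ_i* Ψ_i(x) for all x ∈ X (i.e., the supremum is attained). -/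
/-!
The dual function `G λ = min_x (Ψ₀ x + ∑ λᵢ Ψᵢ x)` is continuous in `λ`, and `σ*` is its
supremum. Since `Ψ₀ ≤ M`, `G λ ≤ M + c λ`, where `c λ = min_x ∑ λᵢ Ψᵢ x` is continuous and
positively homogeneous; the hypothesis on the `Ψᵢ` says exactly that `c < 0` off the origin, so
compactness of the unit sphere gives `c λ ≤ -ε ‖λ‖`. Hence `G → -∞` at infinity and its supremum
is attained.
-/

open Finset Filter

theorem exists_pos_le_neg_mul_norm {E : Type*} [NormedAddCommGroup E] [NormedSpace ℝ E]
    [FiniteDimensional ℝ E] {c : E → ℝ} (hc : Continuous c)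
    (hsmul : ∀ t : ℝ, 0 ≤ t → ∀ v, c (t • v) = t * c v) (hneg : ∀ v ≠ (0 : E), c v < 0) :
    ∃ ε > 0, ∀ v, c v ≤ -(ε * ‖v‖) := by
  have hc0 : c 0 = 0 := by simpa using hsmul 0 le_rfl 0
  rcases subsingleton_or_nontrivial E with hE | hE
  · exact ⟨1, one_pos, fun v => by simp [Subsingleton.elim v 0, hc0]⟩
  obtain ⟨u₀, hu₀, hmax⟩ := (isCompact_sphere (0 : E) 1).exists_isMaxOn
    (NormedSpace.sphere_nonempty.mpr zero_le_one) hc.continuousOn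
  refine ⟨-c u₀, neg_pos.mpr (hneg u₀ (ne_zero_of_mem_unit_sphere ⟨u₀, hu₀⟩)), fun v => ?_⟩
  rcases eq_or_ne v 0 with rfl | hv
  · simp [hc0]
  have hu : ‖v‖⁻¹ • v ∈ Metric.sphere (0 : E) 1 := by simp [norm_smul, hv]
  calc c v = ‖v‖ * c (‖v‖⁻¹ • v) := by
        rw [← hsmul _ (norm_nonneg v), smul_inv_smul₀ (norm_ne_zero_iff.mpr hv)]
    _ ≤ ‖v‖ * c u₀ := mul_le_mul_of_nonneg_left (hmax hu) (norm_nonneg v)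
    _ = -(-c u₀ * ‖v‖) := by ring

namespace SemiInfiniteLP

variable {X : Type*} {K : ℕ}

noncomputable def dualFun (Ψ₀ : X → ℝ) (Ψ : Fin K → X → ℝ) (l : Fin K → ℝ) : ℝ :=
  ⨅ x, Ψ₀ x + ∑ i, l i * Ψ i x

variable {Ψ₀ : X → ℝ} {Ψ : Fin K → X → ℝ}

theorem le_dualFun [Nonempty X] {l : Fin K → ℝ} {θ : ℝ}
    (h : ∀ x, θ ≤ Ψ₀ x + ∑ i, l i * Ψ i x) : θ ≤ dualFun Ψ₀ Ψ l :=
  le_ciInf h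

theorem dualFun_zero_smul {t : ℝ} (ht : 0 ≤ t) (l : Fin K → ℝ) :
    dualFun 0 Ψ (t • l) = t * dualFun 0 Ψ l := by
  simp only [dualFun, Pi.zero_apply, zero_add, Pi.smul_apply, smul_eq_mul, mul_assoc,
    ← Finset.mul_sum, Real.mul_iInf_of_nonneg ht]

variable [TopologicalSpace X] [CompactSpace X]

theorem dualFun_le (hΨ₀ : Continuous Ψ₀) (hΨ : ∀ i, Continuous (Ψ i)) (l : Fin K → ℝ) (x : X) :
    dualFun Ψ₀ Ψ l ≤ Ψ₀ x + ∑ i, l i * Ψ i x :=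
  ciInf_le (isCompact_range (by fun_prop)).bddBelow x

theorem continuous_dualFun (hΨ₀ : Continuous Ψ₀) (hΨ : ∀ i, Continuous (Ψ i)) :
    Continuous (dualFun Ψ₀ Ψ) := by
  have := isCompact_univ.continuous_sInf
    (f := fun (l : Fin K → ℝ) (x : X) => Ψ₀ x + ∑ i, l i * Ψ i x) (by fun_prop)
  simp only [Set.image_univ] at this
  exact this

theorem dualFun_le_add_dualFun_zero [Nonempty X] (hΨ₀ : Continuous Ψ₀)
    (hΨ : ∀ i, Continuous (Ψ i)) {M : ℝ} (hM : ∀ x, Ψ₀ x ≤ M) (l : Fin K → ℝ) :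
    dualFun Ψ₀ Ψ l ≤ M + dualFun 0 Ψ l := by
  have : dualFun Ψ₀ Ψ l - M ≤ dualFun 0 Ψ l :=
    le_dualFun fun x => by
      simp only [Pi.zero_apply, zero_add]; linarith [dualFun_le hΨ₀ hΨ l x, hM x]
  linarith

theorem dualFun_zero_neg (hΨ : ∀ i, Continuous (Ψ i))
    (hind : ∀ v : Fin K → ℝ, (∀ x, 0 ≤ ∑ i, v i * Ψ i x) → v = 0)
    {l : Fin K → ℝ} (hl : l ≠ 0) : dualFun 0 Ψ l < 0 := by
  by_contra! h
  refine hl (hind l fun x => h.trans ?_)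
  simpa using dualFun_le continuous_zero hΨ l x

theorem tendsto_dualFun_cocompact_atBot [Nonempty X] (hΨ₀ : Continuous Ψ₀)
    (hΨ : ∀ i, Continuous (Ψ i))
    (hind : ∀ v : Fin K → ℝ, (∀ x, 0 ≤ ∑ i, v i * Ψ i x) → v = 0) :
    Tendsto (dualFun Ψ₀ Ψ) (cocompact _) atBot := by
  obtain ⟨ε, hε, hdecay⟩ := exists_pos_le_neg_mul_norm (continuous_dualFun continuous_zero hΨ)
    (fun t ht l => dualFun_zero_smul ht l) fun l hl => dualFun_zero_neg hΨ hind hl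
  obtain ⟨M, hM⟩ := (isCompact_range hΨ₀).bddAbove
  have hbound : ∀ l, dualFun Ψ₀ Ψ l ≤ M + -(ε * ‖l‖) := fun l =>
    (dualFun_le_add_dualFun_zero hΨ₀ hΨ (fun x => hM ⟨x, rfl⟩) l).trans
      (add_le_add_right (hdecay l) M)
  exact tendsto_atBot_mono hbound <| tendsto_atBot_add_const_left _ M
    (tendsto_neg_atTop_atBot.comp (tendsto_norm_cocompact_atTop.const_mul_atTop hε))

end SemiInfiniteLP

open SemiInfiniteLP

/-- Existence of a solution of the semi-infinite LP dual problem (Lemma 4.1). -/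
theorem stmt_0 {X : Type*} [MetricSpace X] [CompactSpace X] [Nonempty X]
    {K : ℕ} (Ψ₀ : X → ℝ) (Ψ : Fin K → X → ℝ)
    (hΨ₀ : Continuous Ψ₀) (hΨ : ∀ i, Continuous (Ψ i))
    (hind : ∀ v : Fin K → ℝ, (∀ x, 0 ≤ ∑ i, v i * Ψ i x) → v = 0) :
    ∃ lam : Fin K → ℝ, ∀ x,
      sSup {θ : ℝ | ∃ l : Fin K → ℝ, ∀ x', θ ≤ Ψ₀ x' + ∑ i, l i * Ψ i x'}
        ≤ Ψ₀ x + ∑ i, lam i * Ψ i x := by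
  obtain ⟨lam, hlam⟩ := (continuous_dualFun hΨ₀ hΨ).exists_forall_ge
    (tendsto_dualFun_cocompact_atBot hΨ₀ hΨ hind)
  refine ⟨lam, fun x => (csSup_le ?_ ?_).trans (dualFun_le hΨ₀ hΨ lam x)⟩
  · exact ⟨_, 0, dualFun_le hΨ₀ hΨ 0⟩
  · rintro θ ⟨l, hθ⟩
    exact (le_dualFun hθ).trans (hlam l)
end

section
/- Let Z ⊂ ℝⁿ be compact, F a compact metric space of pairs (μ, z) with second coordinate z ∈ Z, and G̃ : F → ℝ continuous. Suppose ζ* : ℝⁿ → ℝ is continuously differentiable and satisfies G̃* ≤ G̃(μ, z) + ∇ζ*(z)ᵀ g̃(μ, z) for all (μ, z) ∈ F, where g̃ : F → ℝⁿ is continuous. Then for every admissible pair (μ(·), z(·)) of the averaged system (z absolutely continuous with values in Z, z'(t) = g̃(μ(t), z(t)) a.e., (μ(t), z(t)) ∈ F for a.e. t), one has liminf_{T→∞} (1/T) ∫₀^T G̃(μ(t), z(t)) dt ≥ G̃*. -/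
/-!
Along the trajectory, `∫₀ᵀ ∇ζ(z)·z' = ζ(z T) - ζ(z 0)`: `z'` is bounded on the compact set `F`,
so `z` is Lipschitz, `ζ ∘ z` is absolutely continuous and the fundamental theorem of calculus
applies. Integrating the dual inequality gives `G̃* T ≤ ∫₀ᵀ G̃ + 2 sup_Z |ζ|`, and dividing by `T`
bounds the liminf. The averages are also bounded above by `sup_F |G̃|`, without which the liminf
on `ℝ` would be a junk value.
-/

open MeasureTheory Filter Set
open scoped RealInnerProductSpace NNReal

section

variable {E : Type*} [NormedAddCommGroup E] [NormedSpace ℝ E]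

theorem lipschitzOnWith_add_primitive {g : ℝ → E} {s : Set ℝ} (hs : s.OrdConnected) {C : ℝ≥0}
    {c : ℝ} (hg : ∀ x, IntervalIntegrable g volume c x) (hC : ∀ᵐ t ∂volume.restrict s, ‖g t‖ ≤ C)
    (x₀ : E) : LipschitzOnWith C (fun x => x₀ + ∫ t in c..x, g t) s := by
  rw [lipschitzOnWith_iff_norm_sub_le]
  intro x hx y hy
  rw [add_sub_add_left_eq_sub, intervalIntegral.integral_interval_sub_left (hg x) (hg y),
    Real.norm_eq_abs]
  refine intervalIntegral.norm_integral_le_of_norm_le_const_ae ?_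
  filter_upwards [(ae_restrict_iff' hs.measurableSet).1 hC] with t ht hmem
  exact ht (hs.uIcc_subset hy hx (uIoc_subset_uIcc hmem))

variable {ζ : E → ℝ} {γ γ' : ℝ → E} {a b : ℝ} {K : ℝ≥0}

theorem ContDiff.absolutelyContinuousOnInterval_comp (hζ : ContDiff ℝ 1 ζ)
    (hγ : LipschitzOnWith K γ (uIcc a b)) : AbsolutelyContinuousOnInterval (ζ ∘ γ) a b := by
  obtain ⟨L, hL⟩ := LocallyLipschitzOn.exists_lipschitzOnWith_of_compact
    (isCompact_uIcc.image_of_continuousOn hγ.continuousOn) hζ.locallyLipschitz.locallyLipschitzOn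
  exact (hL.comp hγ (mapsTo_image _ _)).absolutelyContinuousOnInterval

theorem ContDiff.deriv_comp_ae_eq (hζ : ContDiff ℝ 1 ζ)
    (hγ' : ∀ᵐ t, t ∈ uIcc a b → HasDerivAt γ (γ' t) t) :
    deriv (ζ ∘ γ) =ᵐ[volume.restrict (uIoc a b)] fun t => fderiv ℝ ζ (γ t) (γ' t) := by
  rw [EventuallyEq, ae_restrict_iff' measurableSet_uIoc]
  filter_upwards [hγ'] with t ht hmem
  exact (((hζ.differentiable one_ne_zero) (γ t)).hasFDerivAt.comp_hasDerivAt t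
    (ht (uIoc_subset_uIcc hmem))).deriv

theorem ContDiff.intervalIntegrable_fderiv_comp (hζ : ContDiff ℝ 1 ζ)
    (hγ : LipschitzOnWith K γ (uIcc a b)) (hγ' : ∀ᵐ t, t ∈ uIcc a b → HasDerivAt γ (γ' t) t) :
    IntervalIntegrable (fun t => fderiv ℝ ζ (γ t) (γ' t)) volume a b :=
  (hζ.absolutelyContinuousOnInterval_comp hγ).intervalIntegrable_deriv.congr_ae
    (hζ.deriv_comp_ae_eq hγ')

theorem ContDiff.integral_fderiv_comp_eq_sub (hζ : ContDiff ℝ 1 ζ)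
    (hγ : LipschitzOnWith K γ (uIcc a b)) (hγ' : ∀ᵐ t, t ∈ uIcc a b → HasDerivAt γ (γ' t) t) :
    ∫ t in a..b, fderiv ℝ ζ (γ t) (γ' t) = ζ (γ b) - ζ (γ a) := by
  rw [← intervalIntegral.integral_congr_ae_restrict (hζ.deriv_comp_ae_eq hγ')]
  exact (hζ.absolutelyContinuousOnInterval_comp hγ).integral_deriv_eq_sub

theorem ContDiff.mul_sub_le_integral_add_sub (hζ : ContDiff ℝ 1 ζ) (hab : a ≤ b)
    (hγ : LipschitzOnWith K γ (uIcc a b)) (hγ' : ∀ᵐ t, t ∈ uIcc a b → HasDerivAt γ (γ' t) t)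
    {G : ℝ → ℝ} (hG : IntervalIntegrable G volume a b) {c : ℝ}
    (hc : ∀ᵐ t, t ∈ Icc a b → c ≤ G t + fderiv ℝ ζ (γ t) (γ' t)) :
    c * (b - a) ≤ (∫ t in a..b, G t) + (ζ (γ b) - ζ (γ a)) := by
  have hφ := hζ.intervalIntegrable_fderiv_comp hγ hγ'
  calc c * (b - a) = ∫ _ in a..b, c := by simp [mul_comm]
    _ ≤ ∫ t in a..b, G t + fderiv ℝ ζ (γ t) (γ' t) :=
      intervalIntegral.integral_mono_ae_restrict hab intervalIntegrable_const (hG.add hφ)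
        ((ae_restrict_iff' measurableSet_Icc).2 hc)
    _ = _ := by rw [intervalIntegral.integral_add hG hφ, hζ.integral_fderiv_comp_eq_sub hγ hγ']

end

theorem le_liminf_inv_mul_of_mul_le_add {I : ℝ → ℝ} {c B K : ℝ}
    (hlow : ∀ᶠ T in atTop, c * T ≤ I T + B) (hup : ∀ᶠ T in atTop, I T ≤ K * T) :
    c ≤ liminf (fun T => 1 / T * I T) atTop := by
  have hlim : Tendsto (fun T : ℝ => c - B * T⁻¹) atTop (nhds c) := by
    simpa using tendsto_const_nhds.sub (tendsto_inv_atTop_zero.const_mul B)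
  have hlow' : ∀ᶠ T in atTop, c - B * T⁻¹ ≤ 1 / T * I T := by
    filter_upwards [hlow, eventually_gt_atTop 0] with T h hT
    rw [← sub_nonneg]
    have hdiff : 1 / T * I T - (c - B * T⁻¹) = (I T + B - c * T) / T := by field_simp; ring
    rw [hdiff]
    exact div_nonneg (by linarith) hT.le
  have hup' : ∀ᶠ T in atTop, 1 / T * I T ≤ K := by
    filter_upwards [hup, eventually_gt_atTop 0] with T h hT
    rw [one_div_mul_eq_div, div_le_iff₀ hT]
    linarith
  calc c = liminf (fun T : ℝ => c - B * T⁻¹) atTop := hlim.liminf_eq.symm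
    _ ≤ _ := liminf_le_liminf hlow' hlim.isBoundedUnder_ge
        (isCoboundedUnder_ge_of_eventually_le _ hup')

theorem stmt_3_general {n : ℕ} {M : Type*} [MetricSpace M]
    (Z : Set (EuclideanSpace ℝ (Fin n))) (hZ : IsCompact Z)
    (F : Set (M × EuclideanSpace ℝ (Fin n))) (hFcomp : IsCompact F)
    (Gt : M × EuclideanSpace ℝ (Fin n) → ℝ) (hGt : ContinuousOn Gt F)
    (gt : M × EuclideanSpace ℝ (Fin n) → EuclideanSpace ℝ (Fin n)) (hgt : ContinuousOn gt F)
    (ζ : EuclideanSpace ℝ (Fin n) → ℝ) (hζ : ContDiff ℝ 1 ζ)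
    (Gstar : ℝ)
    (hdual : ∀ w ∈ F, Gstar ≤ Gt w + ⟪gradient ζ w.2, gt w⟫)
    (μ : ℝ → M) (z : ℝ → EuclideanSpace ℝ (Fin n))
    (hZmem : ∀ t ≥ (0:ℝ), z t ∈ Z)
    (hFmem : ∀ᵐ t ∂(volume.restrict (Ici (0:ℝ))), (μ t, z t) ∈ F)
    (hint : ∀ T : ℝ, IntervalIntegrable (fun t => gt (μ t, z t)) volume 0 T)
    (hintG : ∀ T : ℝ, IntervalIntegrable (fun t => Gt (μ t, z t)) volume 0 T)
    (hode : ∀ T ≥ (0:ℝ), z T = z 0 + ∫ t in (0:ℝ)..T, gt (μ t, z t)) :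
    Gstar ≤ liminf (fun T : ℝ => (1 / T) * ∫ t in (0:ℝ)..T, Gt (μ t, z t)) atTop := by
  set g : ℝ → EuclideanSpace ℝ (Fin n) := fun t => gt (μ t, z t)
  set zc : ℝ → EuclideanSpace ℝ (Fin n) := fun T => z 0 + ∫ t in (0:ℝ)..T, g t
  have hz : ∀ t ≥ 0, zc t = z t := fun t ht => (hode t ht).symm
  obtain ⟨C, hC⟩ := hFcomp.exists_bound_of_continuousOn hgt
  obtain ⟨CG, hCG⟩ := hFcomp.exists_bound_of_continuousOn hGt
  obtain ⟨B, hB⟩ := hZ.exists_bound_of_continuousOn hζ.continuous.continuousOn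
  have hF : ∀ᵐ t, t ∈ Ici 0 → (μ t, z t) ∈ F := (ae_restrict_iff' measurableSet_Ici).1 hFmem
  have hLip : LipschitzOnWith C.toNNReal zc (Ici 0) :=
    lipschitzOnWith_add_primitive ordConnected_Ici hint
      (hFmem.mono fun t ht => (hC _ ht).trans (Real.le_coe_toNNReal C)) (z 0)
  have hζz : ∀ T ≥ 0, |ζ (z T)| ≤ B := fun T hT => Real.norm_eq_abs _ ▸ hB _ (hZmem T hT)
  refine le_liminf_inv_mul_of_mul_le_add (B := 2 * B) (K := CG) ?_ ?_
  · filter_upwards [eventually_ge_atTop 0] with T hT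
    have hγ' : ∀ᵐ t, t ∈ uIcc 0 T → HasDerivAt zc (g t) t := by
      filter_upwards [(hint T).ae_hasDerivAt_integral] with t ht hmem
      exact (ht hmem 0 left_mem_uIcc).const_add _
    have hdualT : ∀ᵐ t, t ∈ Icc 0 T → Gstar ≤ Gt (μ t, z t) + fderiv ℝ ζ (zc t) (g t) := by
      filter_upwards [hF] with t ht hmem
      rw [hz t hmem.1, ← inner_gradient_left]
      exact hdual _ (ht hmem.1)
    have hint_dual := hζ.mul_sub_le_integral_add_sub hT
      (hLip.mono (uIcc_of_le hT ▸ Icc_subset_Ici_self)) hγ' (hintG T) hdualT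
    rw [hz T hT, hz 0 le_rfl, sub_zero] at hint_dual
    linarith [abs_le.1 (hζz T hT), abs_le.1 (hζz 0 le_rfl)]
  · filter_upwards [eventually_ge_atTop 0] with T hT
    have hbound : ∀ᵐ t, t ∈ uIoc 0 T → ‖Gt (μ t, z t)‖ ≤ CG := by
      filter_upwards [hF] with t ht hmem
      exact hCG _ (ht (uIoc_of_le hT ▸ hmem).1.le)
    have hnorm := intervalIntegral.norm_integral_le_of_norm_le_const_ae hbound
    rw [sub_zero, abs_of_nonneg hT, Real.norm_eq_abs] at hnorm
    exact (le_abs_self _).trans hnorm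

/-- A smooth dual-feasible function ζ* with value G̃* bounds from below the long-run
average cost along any admissible pair of the averaged system. -/
theorem stmt_3 {n : ℕ} {M : Type*} [MetricSpace M]
    (Z : Set (EuclideanSpace ℝ (Fin n))) (hZ : IsCompact Z)
    (F : Set (M × EuclideanSpace ℝ (Fin n))) (hFcomp : IsCompact F)
    (hFZ : ∀ w ∈ F, w.2 ∈ Z)
    (Gt : M × EuclideanSpace ℝ (Fin n) → ℝ) (hGt : ContinuousOn Gt F)
    (gt : M × EuclideanSpace ℝ (Fin n) → EuclideanSpace ℝ (Fin n)) (hgt : ContinuousOn gt F)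
    (ζ : EuclideanSpace ℝ (Fin n) → ℝ) (hζ : ContDiff ℝ 1 ζ)
    (Gstar : ℝ)
    (hdual : ∀ w ∈ F, Gstar ≤ Gt w + ⟪gradient ζ w.2, gt w⟫)
    (μ : ℝ → M) (z : ℝ → EuclideanSpace ℝ (Fin n))
    (hZmem : ∀ t ≥ (0:ℝ), z t ∈ Z)
    (hFmem : ∀ᵐ t ∂(volume.restrict (Ici (0:ℝ))), (μ t, z t) ∈ F)
    (hint : ∀ T : ℝ, IntervalIntegrable (fun t => gt (μ t, z t)) volume 0 T)
    (hintG : ∀ T : ℝ, IntervalIntegrable (fun t => Gt (μ t, z t)) volume 0 T)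
    (hode : ∀ T ≥ (0:ℝ), z T = z 0 + ∫ t in (0:ℝ)..T, gt (μ t, z t)) :
    Gstar ≤ liminf (fun T : ℝ => (1 / T) * ∫ t in (0:ℝ)..T, Gt (μ t, z t)) atTop :=
  stmt_3_general Z hZ F hFcomp Gt hGt gt hgt ζ hζ Gstar hdual μ z hZmem hFmem hint hintG hode
end

section
/- Let Z ⊂ ℝⁿ be compact, Z⁰ ⊂ Z a set whose closure has nonempty interior, and suppose any two points z', z'' ∈ Z⁰ can be connected by an admissible trajectory of the averaged system (an absolutely continuous z : [0, T] → Z with z(0) = z', z(T) = z'' and z'(t) = g̃(μ(t), z(t)), (μ(t), z(t)) ∈ F a.e.). Let ψ₁, …, ψ_N ∈ C¹(ℝⁿ) have gradients that are linearly independent on every nonempty open subset of ℝⁿ. If v ∈ ℝᴺ satisfies 0 ≤ Σ_{i=1}^N v_i ∇ψ_i(z)ᵀ g̃(μ, z) for all (μ, z) ∈ F, then v = 0. -/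
open MeasureTheory Filter Set Finset
open scoped RealInnerProductSpace Topology

/-!
Put `Ψ = ∑ vᵢ ψᵢ`. Along an admissible trajectory `z`, the composite `Ψ ∘ z` is absolutely
continuous (`Ψ` is locally Lipschitz and `‖z x - z y‖` is bounded by the increment of the
primitive of `‖ż‖`), and its a.e. derivative `⟪∇Ψ(z), ż⟫` is nonnegative by hypothesis, so
`Ψ ∘ z` does not decrease. Connecting points of `Z⁰` in both directions makes `Ψ` constant on `Z⁰`,
hence on its closure, so `∇Ψ = ∑ vᵢ ∇ψᵢ` vanishes on the interior of the closure.
-/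

theorem AbsolutelyContinuousOnInterval.of_dist_le_mul {X Y : Type*} [PseudoMetricSpace X]
    [PseudoMetricSpace Y] {f : ℝ → X} {h : ℝ → Y} {a b K : ℝ}
    (hh : AbsolutelyContinuousOnInterval h a b)
    (hfh : ∀ x ∈ uIcc a b, ∀ y ∈ uIcc a b, dist (f x) (f y) ≤ K * dist (h x) (h y)) :
    AbsolutelyContinuousOnInterval f a b := by
  unfold AbsolutelyContinuousOnInterval at hh ⊢
  have hK := hh.const_mul K
  rw [mul_zero] at hK
  refine squeeze_zero' (Eventually.of_forall fun _ => sum_nonneg fun _ _ => dist_nonneg) ?_ hK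
  filter_upwards [eventually_inf_principal.mpr (Eventually.of_forall fun _ hE => hE)] with E hE
  rw [mul_sum]
  exact sum_le_sum fun i hi => hfh _ (hE.1 i hi).1 _ (hE.1 i hi).2

theorem AbsolutelyContinuousOnInterval.le_of_ae_deriv_nonneg {φ : ℝ → ℝ} {a b : ℝ}
    (hφ : AbsolutelyContinuousOnInterval φ a b) (hab : a ≤ b)
    (hderiv : ∀ᵐ t ∂volume.restrict (Icc a b), 0 ≤ deriv φ t) : φ a ≤ φ b := by
  rw [← sub_nonneg, ← hφ.integral_deriv_eq_sub]
  exact intervalIntegral.integral_nonneg_of_ae_restrict hab hderiv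

section IntegralCurve

variable {E : Type*} [NormedAddCommGroup E] [NormedSpace ℝ E]
  {g z : ℝ → E} {a b : ℝ}

theorem continuousOn_of_eq_integral (hg : IntervalIntegrable g volume a b)
    (hz : ∀ t ∈ uIcc a b, z t = z a + ∫ s in a..t, g s) : ContinuousOn z (uIcc a b) :=
  (continuousOn_const.add (intervalIntegral.continuousOn_primitive_interval' hg
    left_mem_uIcc)).congr hz

theorem dist_le_of_eq_integral (hg : IntervalIntegrable g volume a b)
    (hz : ∀ t ∈ uIcc a b, z t = z a + ∫ s in a..t, g s) {x y : ℝ} (hx : x ∈ uIcc a b)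
    (hy : y ∈ uIcc a b) :
    dist (z x) (z y) ≤ dist (∫ s in a..x, ‖g s‖) (∫ s in a..y, ‖g s‖) := by
  have hax := hg.mono_set (uIcc_subset_uIcc_left hx)
  have hay := hg.mono_set (uIcc_subset_uIcc_left hy)
  rw [dist_eq_norm, dist_eq_norm, hz x hx, hz y hy, add_sub_add_left_eq_sub,
    intervalIntegral.integral_interval_sub_left hax hay,
    intervalIntegral.integral_interval_sub_left hax.norm hay.norm, Real.norm_eq_abs]
  exact intervalIntegral.norm_integral_le_abs_integral_norm

theorem LocallyLipschitz.absolutelyContinuousOnInterval_comp_of_eq_integral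
    {F : Type*} [PseudoMetricSpace F] {Ψ : E → F} (hΨ : LocallyLipschitz Ψ)
    (hg : IntervalIntegrable g volume a b)
    (hz : ∀ t ∈ uIcc a b, z t = z a + ∫ s in a..t, g s) :
    AbsolutelyContinuousOnInterval (Ψ ∘ z) a b := by
  obtain ⟨K, hK⟩ := hΨ.locallyLipschitzOn.exists_lipschitzOnWith_of_compact
    (isCompact_uIcc.image_of_continuousOn (continuousOn_of_eq_integral hg hz))
  refine (hg.norm.absolutelyContinuousOnInterval_intervalIntegral left_mem_uIcc).of_dist_le_mul
    (K := K) fun x hx y hy => ?_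
  calc dist (Ψ (z x)) (Ψ (z y)) ≤ K * dist (z x) (z y) :=
        hK.dist_le_mul _ (mem_image_of_mem z hx) _ (mem_image_of_mem z hy)
    _ ≤ K * dist (∫ s in a..x, ‖g s‖) (∫ s in a..y, ‖g s‖) := by
        gcongr; exact dist_le_of_eq_integral hg hz hx hy

theorem ae_hasDerivAt_of_eq_integral [CompleteSpace E] (hg : IntervalIntegrable g volume a b)
    (hz : ∀ t ∈ uIcc a b, z t = z a + ∫ s in a..t, g s) :
    ∀ᵐ t, t ∈ Ioo (min a b) (max a b) → HasDerivAt z (g t) t := by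
  filter_upwards [hg.ae_hasDerivAt_integral] with t ht hmem
  have hzt : (fun x => z a + ∫ s in a..x, g s) =ᶠ[𝓝 t] z := by
    filter_upwards [isOpen_Ioo.mem_nhds hmem] with x hx
    exact (hz x (Ioo_subset_Icc_self hx)).symm
  exact ((ht (Ioo_subset_Icc_self hmem) a left_mem_uIcc).const_add (z a)).congr_of_eventuallyEq
    hzt.symm

theorem le_of_eq_integral_of_fderiv_nonneg [CompleteSpace E] {Ψ : E → ℝ} (hΨ : ContDiff ℝ 1 Ψ) (hab : a ≤ b)
    (hg : IntervalIntegrable g volume a b)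
    (hz : ∀ t ∈ Icc a b, z t = z a + ∫ s in a..t, g s)
    (hpos : ∀ᵐ t ∂volume.restrict (Icc a b), 0 ≤ fderiv ℝ Ψ (z t) (g t)) :
    Ψ (z a) ≤ Ψ (z b) := by
  rw [← uIcc_of_le hab] at hz
  refine (hΨ.locallyLipschitz.absolutelyContinuousOnInterval_comp_of_eq_integral hg hz
    ).le_of_ae_deriv_nonneg hab ?_
  have hderiv := ae_hasDerivAt_of_eq_integral hg hz
  rw [min_eq_left hab, max_eq_right hab] at hderiv
  filter_upwards [hpos, ae_restrict_of_ae hderiv, ae_restrict_mem measurableSet_Icc,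
    ae_restrict_of_ae Ioo_ae_eq_Icc.mem_iff] with t hpos_t hderiv_t hIcc hIoo
  rwa [((hΨ.differentiable one_ne_zero (z t)).hasFDerivAt.comp_hasDerivAt t
    (hderiv_t (hIoo.mpr hIcc))).deriv]
end IntegralCurve

theorem fderiv_eq_zero_of_mem_interior_closure {E F : Type*} [NormedAddCommGroup E]
    [NormedSpace ℝ E] [NormedAddCommGroup F] [NormedSpace ℝ F] {f : E → F} (hf : Continuous f)
    {s : Set E} {c : F} (hs : ∀ x ∈ s, f x = c) {x : E} (hx : x ∈ interior (closure s)) :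
    fderiv ℝ f x = 0 := by
  have hconst : f =ᶠ[𝓝 x] fun _ => c :=
    Filter.mem_of_superset (mem_interior_iff_mem_nhds.mp hx)
      (EqOn.closure hs hf continuous_const)
  rw [hconst.fderiv_eq, fderiv_const_apply]

theorem stmt_5_general {n N : ℕ} {M : Type*} [MetricSpace M]
    (Z : Set (EuclideanSpace ℝ (Fin n)))
    (Z0 : Set (EuclideanSpace ℝ (Fin n)))
    (hZ0int : (interior (closure Z0)).Nonempty)
    (F : Set (M × EuclideanSpace ℝ (Fin n)))
    (gt : M × EuclideanSpace ℝ (Fin n) → EuclideanSpace ℝ (Fin n))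
    (hconn : ∀ z' ∈ Z0, ∀ z'' ∈ Z0, ∃ T > (0:ℝ), ∃ μ : ℝ → M,
      ∃ z : ℝ → EuclideanSpace ℝ (Fin n),
        z 0 = z' ∧ z T = z'' ∧ (∀ t ∈ Icc (0:ℝ) T, z t ∈ Z) ∧
        (∀ᵐ t ∂(volume.restrict (Icc (0:ℝ) T)), (μ t, z t) ∈ F) ∧
        (∀ T' ∈ Icc (0:ℝ) T, IntervalIntegrable (fun t => gt (μ t, z t)) volume 0 T') ∧
        (∀ t ∈ Icc (0:ℝ) T, z t = z 0 + ∫ s in (0:ℝ)..t, gt (μ s, z s)))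
    (ψ : Fin N → EuclideanSpace ℝ (Fin n) → ℝ) (hψ : ∀ i, ContDiff ℝ 1 (ψ i))
    (hli : ∀ Q : Set (EuclideanSpace ℝ (Fin n)), IsOpen Q → Q.Nonempty →
      ∀ w : Fin N → ℝ, (∀ x ∈ Q, ∑ i, w i • gradient (ψ i) x = 0) → w = 0)
    (v : Fin N → ℝ)
    (hv : ∀ w ∈ F, 0 ≤ ∑ i, v i * ⟪gradient (ψ i) w.2, gt w⟫) :
    v = 0 := by
  obtain ⟨z₀, hz₀⟩ : Z0.Nonempty := closure_nonempty_iff.mp (hZ0int.mono interior_subset)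
  set Ψ : EuclideanSpace ℝ (Fin n) → ℝ := fun x => ∑ i, v i * ψ i x
  have hΨ : ContDiff ℝ 1 Ψ := ContDiff.sum fun i _ => contDiff_const.mul (hψ i)
  have hΨ' (x) : HasFDerivAt Ψ (∑ i, v i • fderiv ℝ (ψ i) x) x :=
    HasFDerivAt.fun_sum fun i _ =>
      ((hψ i).differentiable one_ne_zero x).hasFDerivAt.const_mul (v i)
  have hmono : ∀ z' ∈ Z0, ∀ z'' ∈ Z0, Ψ z' ≤ Ψ z'' := by
    intro z' hz' z'' hz''
    obtain ⟨T, hT, μ, z, rfl, rfl, -, hF, hint, hz⟩ := hconn z' hz' z'' hz''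
    refine le_of_eq_integral_of_fderiv_nonneg hΨ hT.le (hint T (right_mem_Icc.mpr hT.le)) hz ?_
    filter_upwards [hF] with t ht
    simpa [(hΨ' _).fderiv, inner_gradient_left] using hv _ ht
  have hconst : ∀ x ∈ Z0, Ψ x = Ψ z₀ := fun x hx =>
    le_antisymm (hmono x hx z₀ hz₀) (hmono z₀ hz₀ x hx)
  refine hli _ isOpen_interior hZ0int v fun x hx => ?_
  have hzero := fderiv_eq_zero_of_mem_interior_closure hΨ.continuous hconst hx
  rw [(hΨ' x).fderiv] at hzero
  simp [gradient, ← map_smul, ← map_sum, hzero]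

/-- Under the controllability assumption on the averaged system and linear independence of
the gradients of the test functions, the only nonnegative combination of the dual
constraints is trivial. -/
theorem stmt_5 {n N : ℕ} {M : Type*} [MetricSpace M]
    (Z : Set (EuclideanSpace ℝ (Fin n))) (hZ : IsCompact Z)
    (Z0 : Set (EuclideanSpace ℝ (Fin n))) (hZ0 : Z0 ⊆ Z)
    (hZ0int : (interior (closure Z0)).Nonempty)
    (F : Set (M × EuclideanSpace ℝ (Fin n)))
    (gt : M × EuclideanSpace ℝ (Fin n) → EuclideanSpace ℝ (Fin n))
    (hconn : ∀ z' ∈ Z0, ∀ z'' ∈ Z0, ∃ T > (0:ℝ), ∃ μ : ℝ → M,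
      ∃ z : ℝ → EuclideanSpace ℝ (Fin n),
        z 0 = z' ∧ z T = z'' ∧ (∀ t ∈ Icc (0:ℝ) T, z t ∈ Z) ∧
        (∀ᵐ t ∂(volume.restrict (Icc (0:ℝ) T)), (μ t, z t) ∈ F) ∧
        (∀ T' ∈ Icc (0:ℝ) T, IntervalIntegrable (fun t => gt (μ t, z t)) volume 0 T') ∧
        (∀ t ∈ Icc (0:ℝ) T, z t = z 0 + ∫ s in (0:ℝ)..t, gt (μ s, z s)))
    (ψ : Fin N → EuclideanSpace ℝ (Fin n) → ℝ) (hψ : ∀ i, ContDiff ℝ 1 (ψ i))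
    (hli : ∀ Q : Set (EuclideanSpace ℝ (Fin n)), IsOpen Q → Q.Nonempty →
      ∀ w : Fin N → ℝ, (∀ x ∈ Q, ∑ i, w i • gradient (ψ i) x = 0) → w = 0)
    (v : Fin N → ℝ)
    (hv : ∀ w ∈ F, 0 ≤ ∑ i, v i * ⟪gradient (ψ i) w.2, gt w⟫) :
    v = 0 :=
  stmt_5_general Z Z0 hZ0int F gt hconn ψ hψ hli v hv
end
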